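/- arXiv:2102.01434 — 3 statements merged into one kernel-verified Lean document; each statement's English description precedes it below -/
import Mathlib

section
/- Let w1 and w2 be infinite sequences of states that are stutter-equivalent with respect to a labelling L. If w1 satisfies the until formula Φ1 U Φ2 — i.e., there exists j with L-determined satisfaction w1(j) ⊨ Φ2 and w1(i) ⊨ Φ1 for all i < j — where satisfaction of Φ1 and Φ2 depends only on the label of a state, then w2 also satisfies Φ1 U Φ2. -/
/-- Two infinite sequences of states are stutter-equivalent w.r.t. a labelling
`L` if they can be partitioned into corresponding finite nonempty blocks (via
strictly increasing cut sequences starting at 0) such that all states in the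
`r`-th block of `w1` and the `r`-th block of `w2` carry the same label. -/
def StutterEquiv {S AP : Type*} (L : S → Set AP) (w1 w2 : ℕ → S) : Prop :=
  ∃ j k : ℕ → ℕ, j 0 = 0 ∧ k 0 = 0 ∧ StrictMono j ∧ StrictMono k ∧
    ∀ r i1 i2, j r ≤ i1 → i1 < j (r + 1) → k r ≤ i2 → i2 < k (r + 1) →
      L (w1 i1) = L (w2 i2)

/-- Every natural number lies in some block of a strictly increasing cut
sequence starting at 0. -/
lemma exists_block (f : ℕ → ℕ) (h0 : f 0 = 0) (hf : StrictMono f) (n : ℕ) :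
    ∃ r, f r ≤ n ∧ n < f (r + 1) := by
  induction n with
  | zero =>
    refine ⟨0, h0.le, ?_⟩
    have : f 0 < f (0 + 1) := hf (Nat.lt_succ_self 0)
    omega
  | succ n ih =>
    obtain ⟨r, hr1, hr2⟩ := ih
    rcases lt_or_eq_of_le (Nat.succ_le_of_lt hr2) with h | h
    · exact ⟨r, le_trans hr1 (Nat.le_succ n), h⟩
    · refine ⟨r + 1, h.ge, ?_⟩
      have : f (r + 1) < f (r + 1 + 1) := hf (Nat.lt_succ_self _)
      omega

/-- Stutter equivalence preserves the until operator: if `w1 ⊨ Φ1 U Φ2`, where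
satisfaction of `Φ1`, `Φ2` at a state depends only on the label of that state,
and `w1` and `w2` are stutter-equivalent, then `w2 ⊨ Φ1 U Φ2`. -/
theorem stutterEquiv_preserves_until {S AP : Type*} (L : S → Set AP)
    (Φ1 Φ2 : Set AP → Prop) (w1 w2 : ℕ → S)
    (hse : StutterEquiv L w1 w2)
    (h1 : ∃ j : ℕ, Φ2 (L (w1 j)) ∧ ∀ i < j, Φ1 (L (w1 i))) :
    ∃ j : ℕ, Φ2 (L (w2 j)) ∧ ∀ i < j, Φ1 (L (w2 i)) := by
  obtain ⟨js, ks, hj0, hk0, hjm, hkm, hlab⟩ := hse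
  obtain ⟨j, hj2, hj1⟩ := h1
  obtain ⟨r, hr1, hr2⟩ := exists_block js hj0 hjm j
  refine ⟨ks r, ?_, ?_⟩
  · have := hlab r j (ks r) hr1 hr2 le_rfl (hkm (Nat.lt_succ_self r))
    exact this ▸ hj2
  · intro i hi
    obtain ⟨r', h1', h2'⟩ := exists_block ks hk0 hkm i
    have hrr : r' < r := by
      by_contra h
      exact absurd (le_trans (hkm.le_iff_le.mpr (not_lt.mp h)) h1') (not_le.mpr hi)
    have hlt : js r' < j := lt_of_lt_of_le (hjm hrr) hr1
    have := hlab r' (js r') i le_rfl (hjm (Nat.lt_succ_self r')) h1' h2'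
    exact this ▸ hj1 _ hlt
end

section
/- Let E be an equivalence relation on a finite state space S of a Markov decision process such that E-related states have equal labels and, whenever (s,t) ∈ E, for every action a enabled at s there is an action b enabled at t with P(s,a,·) ≡_E P(t,b,·) and vice versa (matching step condition, without stuttering). Then for any E-related states s, t and any n ∈ ℕ: the maximum over policies of the probability of reaching a given union of E-classes G within n steps from s equals the corresponding maximum from t. -/
/-- Maximal probability (over policies, computed by Bellman backup over enabled
actions) of reaching the set `G` within `n` steps. -/
def maxReach {S A : Type*} [Fintype S]
    (P : S → A → S → ℝ) (enabled : S → Finset A)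
    (hne : ∀ s, (enabled s).Nonempty)
    (G : Set S) [DecidablePred (· ∈ G)] : ℕ → S → ℝ
  | 0, s => if s ∈ G then 1 else 0
  | n + 1, s =>
      if s ∈ G then 1
      else (enabled s).sup' (hne s)
        (fun a => ∑ s', P s a s' * maxReach P enabled hne G n s')

/-- For an MDP whose states are related by an equivalence relation `E` such
that `E`-related states have equal labels and matching actions inducing
`≡_E`-equivalent transition distributions (in both directions), the maximal
probability of reaching a union `G` of `E`-classes within `n` steps is the
same from any two `E`-related states. -/
theorem bisim_preserves_maxReach {S A AP : Type*} [Fintype S] [Fintype A]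
    (P : S → A → S → ℝ) (enabled : S → Finset A)
    (hne : ∀ s, (enabled s).Nonempty)
    (hP0 : ∀ s a s', 0 ≤ P s a s') (hProws : ∀ s, ∀ a ∈ enabled s, ∑ s', P s a s' = 1)
    (L : S → Set AP)
    (E : S → S → Prop) [DecidableRel E] (hE : Equivalence E)
    (hlab : ∀ s t, E s t → L s = L t)
    (hmatch₁ : ∀ s t, E s t → ∀ a ∈ enabled s, ∃ b ∈ enabled t,
      ∀ u : S, (∑ s' ∈ Finset.univ.filter (fun s' => E u s'), P s a s') =
               (∑ s' ∈ Finset.univ.filter (fun s' => E u s'), P t b s'))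
    (hmatch₂ : ∀ s t, E s t → ∀ b ∈ enabled t, ∃ a ∈ enabled s,
      ∀ u : S, (∑ s' ∈ Finset.univ.filter (fun s' => E u s'), P s a s') =
               (∑ s' ∈ Finset.univ.filter (fun s' => E u s'), P t b s'))
    (G : Set S) [DecidablePred (· ∈ G)]
    (hG : ∀ s t, E s t → (s ∈ G ↔ t ∈ G)) :
    ∀ s t, E s t → ∀ n : ℕ,
      maxReach P enabled hne G n s = maxReach P enabled hne G n t := by
  classical
  -- canonical representatives of E-classes
  let sd : Setoid S := ⟨E, hE⟩
  let rep : S → S := fun x => (Quotient.mk sd x).out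
  have hrep : ∀ x, E x (rep x) := by
    intro x
    have : Quotient.mk sd ((Quotient.mk sd x).out) = Quotient.mk sd x :=
      Quotient.out_eq _
    exact hE.symm (Quotient.exact this)
  have hrep_eq : ∀ x y, E x y → rep x = rep y := by
    intro x y h
    simp only [rep]
    congr 1
    exact Quotient.sound h
  -- key: matching actions give equal expected values of E-invariant functions
  have key : ∀ (v : S → ℝ), (∀ u u', E u u' → v u = v u') →
      ∀ (s t : S) (a b : A),
      (∀ u : S, (∑ s' ∈ Finset.univ.filter (fun s' => E u s'), P s a s') =
                (∑ s' ∈ Finset.univ.filter (fun s' => E u s'), P t b s')) →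
      ∑ s', P s a s' * v s' = ∑ s', P t b s' * v s' := by
    intro v hv s t a b hab
    have hfib : ∀ (w : S) (c : A),
        ∑ s', P w c s' * v s' =
        ∑ u, (∑ s' ∈ Finset.univ.filter (fun s' => rep s' = u), P w c s') * v u := by
      intro w c
      rw [← Finset.sum_fiberwise Finset.univ rep (fun s' => P w c s' * v s')]
      refine Finset.sum_congr rfl fun u _ => ?_
      rw [Finset.sum_mul]
      refine Finset.sum_congr rfl fun x hx => ?_
      have hxu : rep x = u := (Finset.mem_filter.mp hx).2
      have : v x = v u := by
        rw [← hxu]; exact hv x (rep x) (hrep x)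
      rw [this]
    rw [hfib s a, hfib t b]
    refine Finset.sum_congr rfl fun u _ => ?_
    by_cases hu : ∃ x, rep x = u
    · obtain ⟨x, hx⟩ := hu
      have hrepu : rep u = u := by
        rw [← hx, hrep_eq (rep x) x (hE.symm (hrep x))]
      have hset : (Finset.univ.filter (fun s' => rep s' = u)) =
          (Finset.univ.filter (fun s' => E u s')) := by
        ext y
        simp only [Finset.mem_filter, Finset.mem_univ, true_and]
        constructor
        · intro h; rw [← h]; exact hE.symm (hrep y)
        · intro h; rw [hrep_eq y u (hE.symm h), hrepu]
      rw [hset, hab u]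
    · have hset : (Finset.univ.filter (fun s' => rep s' = u)) = ∅ := by
        ext y
        simp only [Finset.mem_filter, Finset.mem_univ, true_and,
          Finset.notMem_empty, iff_false]
        intro h; exact hu ⟨y, h⟩
      rw [hset]
      simp
  -- main induction
  intro s t hst n
  induction n generalizing s t with
  | zero =>
    simp only [maxReach]
    by_cases h : s ∈ G
    · rw [if_pos h, if_pos ((hG s t hst).mp h)]
    · rw [if_neg h, if_neg (fun ht => h ((hG s t hst).mpr ht))]
  | succ n ih =>
    simp only [maxReach]
    by_cases h : s ∈ G
    · rw [if_pos h, if_pos ((hG s t hst).mp h)]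
    · rw [if_neg h, if_neg (fun ht => h ((hG s t hst).mpr ht))]
      have hv : ∀ u u', E u u' → maxReach P enabled hne G n u =
          maxReach P enabled hne G n u' := fun u u' h => ih u u' h
      apply le_antisymm
      · apply Finset.sup'_le
        intro a ha
        obtain ⟨b, hb, hab⟩ := hmatch₁ s t hst a ha
        rw [key _ hv s t a b hab]
        exact Finset.le_sup' (fun a => ∑ s', P t a s' * maxReach P enabled hne G n s') hb
      · apply Finset.sup'_le
        intro b hb
        obtain ⟨a, ha, hab⟩ := hmatch₂ s t hst b hb
        rw [← key _ hv s t a b hab]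
        exact Finset.le_sup' (fun a => ∑ s', P s a s' * maxReach P enabled hne G n s') ha
end

section
/- Strong probabilistic bisimulation refines to the identity on labels in the following sense: if E is an equivalence relation on a finite labelled Markov chain (S, P, L) satisfying: (s,t) ∈ E implies L(s) = L(t) and P(s, C) = P(t, C) for all E-classes C, then the satisfaction of any PCTL formula built from atoms, ∧, ¬, and the unbounded probabilistic until operator P_{∼p}(Φ1 U Φ2) is invariant under E: for all (s,t) ∈ E, s ⊨ Φ iff t ⊨ Φ. -/
open scoped Classical

/-- Comparison operators ∼ ∈ {<, ≤, >, ≥}. -/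
inductive Cmp where
  | lt | le | gt | ge

def Cmp.denote : Cmp → ℝ → ℝ → Prop
  | .lt, x, p => x < p
  | .le, x, p => x ≤ p
  | .gt, x, p => x > p
  | .ge, x, p => x ≥ p

/-- PCTL formulas built from atoms, ∧, ¬, and the unbounded probabilistic
until `P_{∼p}(Φ1 U Φ2)`. -/
inductive PCTL (AP : Type) where
  | tt : PCTL AP
  | atom : AP → PCTL AP
  | and : PCTL AP → PCTL AP → PCTL AP
  | not : PCTL AP → PCTL AP
  | prob : Cmp → ℝ → PCTL AP → PCTL AP → PCTL AP

/-- Probability of satisfying `Φ1 U Φ2` within `n` steps in the Markov chain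
`P`, for state predicates `φ1, φ2`. -/
noncomputable def untilProbN {S : Type} [Fintype S] (P : S → S → ℝ)
    (φ1 φ2 : S → Prop) : ℕ → S → ℝ
  | 0, s => if φ2 s then 1 else 0
  | n + 1, s =>
      if φ2 s then 1
      else if φ1 s then ∑ s', P s s' * untilProbN P φ1 φ2 n s' else 0

/-- Probability (over infinite paths of the finite Markov chain) of satisfying
`Φ1 U Φ2` from a state, as the supremum of the bounded approximations. -/
noncomputable def untilProb {S : Type} [Fintype S] (P : S → S → ℝ)
    (φ1 φ2 : S → Prop) (s : S) : ℝ :=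
  ⨆ n : ℕ, untilProbN P φ1 φ2 n s

/-- PCTL satisfaction in the labelled Markov chain `(S, P, L)`. -/
noncomputable def PCTLSat {S AP : Type} [Fintype S]
    (L : S → Set AP) (P : S → S → ℝ) : PCTL AP → S → Prop
  | PCTL.tt, _ => True
  | PCTL.atom a, s => a ∈ L s
  | PCTL.and f g, s => PCTLSat L P f s ∧ PCTLSat L P g s
  | PCTL.not f, s => ¬ PCTLSat L P f s
  | PCTL.prob c p f g, s =>
      c.denote (untilProb P (PCTLSat L P f) (PCTLSat L P g) s) p

section Aux

variable {S : Type} [Fintype S] (P : S → S → ℝ)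
    (E : S → S → Prop) [DecidableRel E]

/-- Summation against `P s ·` of an `E`-invariant function is `E`-invariant,
given lumpability. -/
theorem sum_mul_invariant (hE : Equivalence E)
    (hlump : ∀ s t, E s t → ∀ u : S,
      (∑ s' ∈ Finset.univ.filter (fun s' => E u s'), P s s') =
      (∑ s' ∈ Finset.univ.filter (fun s' => E u s'), P t s'))
    (f : S → ℝ) (hf : ∀ a b, E a b → f a = f b)
    {s t : S} (hst : E s t) :
    ∑ s', P s s' * f s' = ∑ s', P t s' * f s' := by
  letI sd : Setoid S := ⟨E, hE⟩
  haveI : DecidableEq (Quotient sd) := fun a b =>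
    Quotient.recOnSubsingleton₂ a b fun x y =>
      decidable_of_iff (E x y) (Quotient.eq (r := sd)).symm
  have key : ∀ w : S, ∑ s', P w s' * f s' =
      ∑ q : Quotient sd, f q.out *
        (∑ s' ∈ Finset.univ.filter (fun s' => E q.out s'), P w s') := by
    intro w
    rw [← Finset.sum_fiberwise Finset.univ (fun s' => (⟦s'⟧ : Quotient sd))
      (fun s' => P w s' * f s')]
    refine Finset.sum_congr rfl fun q _ => ?_
    rw [Finset.mul_sum]
    have hfil : (Finset.univ.filter (fun s' => (⟦s'⟧ : Quotient sd) = q)) =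
        Finset.univ.filter (fun s' => E q.out s') := by
      ext s'
      simp only [Finset.mem_filter, Finset.mem_univ, true_and]
      constructor
      · intro h
        have : (⟦s'⟧ : Quotient sd) = ⟦q.out⟧ := by rw [h, Quotient.out_eq]
        exact hE.symm (Quotient.exact this)
      · intro h
        have : (⟦s'⟧ : Quotient sd) = ⟦q.out⟧ := Quotient.sound (hE.symm h)
        rw [this, Quotient.out_eq]
    rw [hfil]
    refine Finset.sum_congr rfl fun s' hs' => ?_
    have hEs : E q.out s' := (Finset.mem_filter.mp hs').2
    rw [hf _ _ hEs, mul_comm]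
  rw [key s, key t]
  refine Finset.sum_congr rfl fun q _ => ?_
  rw [hlump s t hst q.out]

theorem untilProbN_invariant (hE : Equivalence E)
    (hlump : ∀ s t, E s t → ∀ u : S,
      (∑ s' ∈ Finset.univ.filter (fun s' => E u s'), P s s') =
      (∑ s' ∈ Finset.univ.filter (fun s' => E u s'), P t s'))
    (φ1 φ2 : S → Prop)
    (h1 : ∀ a b, E a b → (φ1 a ↔ φ1 b)) (h2 : ∀ a b, E a b → (φ2 a ↔ φ2 b)) :
    ∀ n (s t : S), E s t → untilProbN P φ1 φ2 n s = untilProbN P φ1 φ2 n t := by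
  intro n
  induction n with
  | zero =>
    intro s t hst
    simp only [untilProbN]
    rw [if_congr (h2 s t hst) rfl rfl]
  | succ n ih =>
    intro s t hst
    simp only [untilProbN]
    rw [if_congr (h2 s t hst) rfl rfl, if_congr (h1 s t hst) rfl rfl,
      sum_mul_invariant P E hE hlump _ (fun a b hab => ih a b hab) hst]

end Aux

/-- Strong probabilistic bisimulation preserves PCTL: if `E` is an equivalence
relation on a finite labelled Markov chain `(S, P, L)` such that `E`-related
states have equal labels and assign equal probability to every `E`-class, then
satisfaction of every PCTL formula (atoms, ∧, ¬, probabilistic until) is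
invariant under `E`. -/
theorem strong_bisim_preserves_PCTL {S AP : Type} [Fintype S]
    (L : S → Set AP) (P : S → S → ℝ)
    (hP0 : ∀ s s', 0 ≤ P s s') (hProws : ∀ s, ∑ s', P s s' = 1)
    (E : S → S → Prop) [DecidableRel E] (hE : Equivalence E)
    (hlab : ∀ s t, E s t → L s = L t)
    (hlump : ∀ s t, E s t → ∀ u : S,
      (∑ s' ∈ Finset.univ.filter (fun s' => E u s'), P s s') =
      (∑ s' ∈ Finset.univ.filter (fun s' => E u s'), P t s')) :
    ∀ (Φ : PCTL AP) (s t : S), E s t → (PCTLSat L P Φ s ↔ PCTLSat L P Φ t) := by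
  intro Φ
  induction Φ with
  | tt => intro s t _; simp [PCTLSat]
  | atom a => intro s t hst; simp only [PCTLSat]; rw [hlab s t hst]
  | and f g ihf ihg =>
    intro s t hst
    simp only [PCTLSat]
    exact and_congr (ihf s t hst) (ihg s t hst)
  | not f ihf =>
    intro s t hst
    simp only [PCTLSat]
    exact not_congr (ihf s t hst)
  | prob c p f g ihf ihg =>
    intro s t hst
    simp only [PCTLSat]
    have hN := untilProbN_invariant P E hE hlump (PCTLSat L P f) (PCTLSat L P g)
      (fun a b hab => ihf a b hab) (fun a b hab => ihg a b hab)
    have : untilProb P (PCTLSat L P f) (PCTLSat L P g) s =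
        untilProb P (PCTLSat L P f) (PCTLSat L P g) t := by
      unfold untilProb
      congr 1
      funext n
      exact hN n s t hst
    rw [this]
end
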